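/- For any weighted graph G with nonnegative edge weights, λ_max(H^EPR(G))/2 ≤ λ_max(H^QMC(G)) ≤ λ_max(H^EPR(G)). -/

import Mathlib

open Matrix Finset

noncomputable section

/-- Computational basis states of `n` qubits. -/
abbrev QState (n : ℕ) := Fin n → Fin 2

/-- Pauli `X` matrix. -/
def pauliX : Matrix (Fin 2) (Fin 2) ℂ := !![0, 1; 1, 0]

/-- Pauli `Y` matrix. -/
def pauliY : Matrix (Fin 2) (Fin 2) ℂ := !![0, -Complex.I; Complex.I, 0]

/-- Pauli `Z` matrix. -/
def pauliZ : Matrix (Fin 2) (Fin 2) ℂ := !![1, 0; 0, -1]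

/-- The operator acting as `P` on qubit `i`, `Q` on qubit `j`, and the identity on all
other qubits of an `n`-qubit system. -/
def twoSite (n : ℕ) (i j : Fin n) (P Q : Matrix (Fin 2) (Fin 2) ℂ) :
    Matrix (QState n) (QState n) ℂ :=
  Matrix.of fun x y =>
    P (x i) (y i) * Q (x j) (y j) *
      ∏ l ∈ Finset.univ \ {i, j}, (if x l = y l then (1 : ℂ) else 0)

/-- Quantum MaxCut term on the pair `(i,j)`: `(1/2)(I - XᵢXⱼ - YᵢYⱼ - ZᵢZⱼ)`. -/
def hQMC (n : ℕ) (i j : Fin n) : Matrix (QState n) (QState n) ℂ :=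
  (1 / 2 : ℂ) • ((1 : Matrix (QState n) (QState n) ℂ)
    - twoSite n i j pauliX pauliX - twoSite n i j pauliY pauliY
    - twoSite n i j pauliZ pauliZ)

/-- XY term on the pair `(i,j)`: `(1/2)(I - XᵢXⱼ - YᵢYⱼ)`. -/
def hXY (n : ℕ) (i j : Fin n) : Matrix (QState n) (QState n) ℂ :=
  (1 / 2 : ℂ) • ((1 : Matrix (QState n) (QState n) ℂ)
    - twoSite n i j pauliX pauliX - twoSite n i j pauliY pauliY)

/-- EPR term on the pair `(i,j)`: `(1/2)(I + XᵢXⱼ - YᵢYⱼ + ZᵢZⱼ)`. -/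
def hEPR (n : ℕ) (i j : Fin n) : Matrix (QState n) (QState n) ℂ :=
  (1 / 2 : ℂ) • ((1 : Matrix (QState n) (QState n) ℂ)
    + twoSite n i j pauliX pauliX - twoSite n i j pauliY pauliY
    + twoSite n i j pauliZ pauliZ)

/-- Quantum MaxCut Hamiltonian of a weighted graph given by a symmetric weight
function `w` (each edge is counted twice in the double sum, whence the factor `1/2`). -/
def HQMC (n : ℕ) (w : Fin n → Fin n → ℝ) : Matrix (QState n) (QState n) ℂ :=
  (1 / 2 : ℂ) • ∑ i, ∑ j, (w i j : ℂ) • hQMC n i j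

/-- XY Hamiltonian of a weighted graph. -/
def HXY (n : ℕ) (w : Fin n → Fin n → ℝ) : Matrix (QState n) (QState n) ℂ :=
  (1 / 2 : ℂ) • ∑ i, ∑ j, (w i j : ℂ) • hXY n i j

/-- EPR Hamiltonian of a weighted graph. -/
def HEPR (n : ℕ) (w : Fin n → Fin n → ℝ) : Matrix (QState n) (QState n) ℂ :=
  (1 / 2 : ℂ) • ∑ i, ∑ j, (w i j : ℂ) • hEPR n i j

/-- The largest (real) eigenvalue of a Hamiltonian: the supremum of the real numbers in
its complex spectrum. -/
def maxEigH {n : ℕ} (H : Matrix (QState n) (QState n) ℂ) : ℝ :=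
  sSup {r : ℝ | (r : ℂ) ∈ spectrum ℂ H}

/-!
For the upper bound, conjugating every qubit by the rotation `rotX`, which maps `(X, Y, Z)` to
`(X, Z, -Y)`, turns each EPR term into `(I + XX + YY - ZZ) / 2`, whose entries are the absolute
values of the entries of the QMC term. For a top eigenvector `ψ` of `H^QMC`, the vector `|ψ|` then
has at least the same energy for the rotated `H^EPR`, a matrix with the spectrum of `H^EPR`.

For the lower bound, conjugating by `Y` on the qubits of a set `S` fixes the QMC term of an edge
not cut by `S` and turns it into the EPR term of an edge cut by `S`. Every edge is cut by half of
the sets, so the average of these conjugates of `H^QMC` is `(H^QMC + H^EPR) / 2`, which dominates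
`H^EPR / 2` because each QMC term is twice a projection, while each conjugate has top eigenvalue
`λ_max(H^QMC)`.
-/

open scoped ComplexOrder
open Unitary (conjStarAlgAut)

theorem one_sub_mul_one_sub_of_mul_self_eq_one {A : Type*} [Ring A] {a : A} (ha : a * a = 1) :
    (1 - a) * (1 - a) = (1 - a) + (1 - a) := by
  rw [sub_mul, mul_sub, mul_sub, ha]
  noncomm_ring

theorem card_filter_apply_eq_eq_card_filter_apply_ne {ι : Type*} [Fintype ι] [DecidableEq ι]
    {i j : ι} (hij : i ≠ j) : #{s : ι → Fin 2 | s i = s j} = #{s : ι → Fin 2 | s i ≠ s j} := by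
  have hflip : ∀ a b : Fin 2, a = b ↔ a + 1 ≠ b := by decide
  refine card_equiv (Equiv.addRight (Pi.single i 1)) fun s => ?_
  simp only [mem_filter, mem_univ, true_and, Equiv.coe_addRight, Pi.add_apply, Pi.single_eq_same,
    Pi.single_eq_of_ne hij.symm, add_zero]
  exact hflip _ _

section KronPi

variable {ι α R : Type*} [Fintype ι]

def kronPi [CommSemiring R] (g : ι → Matrix α α R) : Matrix (ι → α) (ι → α) R :=
  of fun x y => ∏ l, g l (x l) (y l)

theorem kronPi_mul [CommSemiring R] [Fintype α] [DecidableEq ι] (g h : ι → Matrix α α R) :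
    kronPi g * kronPi h = kronPi fun l => g l * h l := by
  ext x y
  simp only [kronPi, mul_apply, of_apply, Fintype.prod_sum, prod_mul_distrib]

theorem kronPi_one [CommSemiring R] [DecidableEq ι] [DecidableEq α] :
    kronPi (fun _ => 1 : ι → Matrix α α R) = 1 := by
  ext x y
  by_cases hxy : x = y
  · subst hxy
    simp [kronPi, one_apply]
  · obtain ⟨l, hl⟩ := Function.ne_iff.mp hxy
    simp [kronPi, hxy, prod_eq_zero (mem_univ l), one_apply, hl]

theorem kronPi_conjTranspose [CommSemiring R] [StarRing R] (g : ι → Matrix α α R) :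
    (kronPi g)ᴴ = kronPi fun l => (g l)ᴴ := by
  ext x y
  simp [kronPi, conjTranspose_apply]

variable [Fintype α] [DecidableEq ι] [DecidableEq α] [CommRing R] [StarRing R]

theorem kronPi_mem_unitaryGroup {g : ι → Matrix α α R} (hg : ∀ l, g l ∈ unitaryGroup α R) :
    kronPi g ∈ unitaryGroup (ι → α) R := by
  rw [mem_unitaryGroup_iff, star_eq_conjTranspose, kronPi_conjTranspose, kronPi_mul, ← kronPi_one]
  exact congrArg kronPi (funext fun l => mem_unitaryGroup_iff.mp (hg l))

def kronPiUnitary (u : ι → unitaryGroup α R) : unitaryGroup (ι → α) R :=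
  ⟨kronPi fun l => u l, kronPi_mem_unitaryGroup fun l => (u l).2⟩

end KronPi

section Energy

variable {ι : Type*} [Fintype ι]

def energy (H : Matrix ι ι ℂ) (v : ι → ℂ) : ℝ := (star v ⬝ᵥ H *ᵥ v).re

theorem energy_add (A B : Matrix ι ι ℂ) (v : ι → ℂ) :
    energy (A + B) v = energy A v + energy B v := by
  simp [energy, add_mulVec, dotProduct_add]

theorem energy_sum {κ : Type*} (s : Finset κ) (H : κ → Matrix ι ι ℂ) (v : ι → ℂ) :
    energy (∑ k ∈ s, H k) v = ∑ k ∈ s, energy (H k) v := by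
  simp [energy, sum_mulVec, dotProduct_sum, Complex.re_sum]

theorem energy_ofReal_smul (r : ℝ) (H : Matrix ι ι ℂ) (v : ι → ℂ) :
    energy ((r : ℂ) • H) v = r * energy H v := by
  simp [energy, smul_mulVec, dotProduct_smul]

theorem star_dotProduct_mulVec_eq_sum_sum (M : Matrix ι ι ℂ) (u : ι → ℂ) :
    star u ⬝ᵥ M *ᵥ u = ∑ x, ∑ y, star (u x) * M x y * u y := by
  simp [dotProduct, mulVec, mul_sum, mul_assoc]

theorem energy_le_energy_norm {A B : Matrix ι ι ℂ} (h : ∀ x y, ‖A x y‖ ≤ (B x y).re) (v : ι → ℂ) :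
    energy A v ≤ energy B fun x => (‖v x‖ : ℂ) := by
  rw [energy, energy, star_dotProduct_mulVec_eq_sum_sum, star_dotProduct_mulVec_eq_sum_sum]
  calc (∑ x, ∑ y, star (v x) * A x y * v y).re
      ≤ ∑ x, ∑ y, ‖v x‖ * ‖A x y‖ * ‖v y‖ :=
        (Complex.re_le_norm _).trans <| (norm_sum_le _ _).trans <| sum_le_sum fun x _ =>
          (norm_sum_le _ _).trans_eq <| by simp
    _ ≤ ∑ x, ∑ y, ‖v x‖ * (B x y).re * ‖v y‖ := by gcongr with x _ y _; exact h x y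
    _ = (∑ x, ∑ y, star (‖v x‖ : ℂ) * B x y * ‖v y‖).re := by
        simp [Complex.re_sum]

theorem re_star_norm_dotProduct (v : ι → ℂ) :
    (star (fun x => (‖v x‖ : ℂ)) ⬝ᵥ fun x => (‖v x‖ : ℂ)).re = (star v ⬝ᵥ v).re := by
  simp [dotProduct, Complex.re_sum, ← Complex.normSq_apply, Complex.normSq_eq_norm_sq, sq]

open scoped MatrixOrder in
theorem Matrix.IsHermitian.energy_le_of_spectrum_le [DecidableEq ι] {H : Matrix ι ι ℂ}
    (hH : H.IsHermitian) {r : ℝ} (h : ∀ x ∈ spectrum ℝ H, x ≤ r) (v : ι → ℂ) :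
    energy H v ≤ r * (star v ⬝ᵥ v).re := by
  have hle : H ≤ algebraMap ℝ _ r := (le_algebraMap_iff_spectrum_le hH.isSelfAdjoint).2 h
  have := (Matrix.le_iff.1 hle).re_dotProduct_nonneg v
  rw [Algebra.algebraMap_eq_smul_one, sub_mulVec, dotProduct_sub] at this
  simp only [smul_mulVec, one_mulVec, dotProduct_smul, RCLike.re_to_complex, Complex.sub_re,
    Complex.real_smul, Complex.re_ofReal_mul] at this
  rw [energy]
  linarith

end Energy

theorem Matrix.IsHermitian.conjStarAlgAut {ι : Type*} [Fintype ι] [DecidableEq ι]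
    {H : Matrix ι ι ℂ} (hH : H.IsHermitian) (U : unitaryGroup ι ℂ) :
    (conjStarAlgAut ℂ _ U H).IsHermitian :=
  (hH.isSelfAdjoint.map _).isHermitian

section MaxEig

variable {n : ℕ} {H : Matrix (QState n) (QState n) ℂ}

theorem maxEigH_eq_sSup_spectrum (H : Matrix (QState n) (QState n) ℂ) :
    maxEigH H = sSup (spectrum ℝ H) := by
  simp only [maxEigH, ← Complex.coe_algebraMap, spectrum.algebraMap_mem_iff]
  rfl

theorem le_maxEigH_of_mem_spectrum {x : ℝ} (hx : x ∈ spectrum ℝ H) : x ≤ maxEigH H := by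
  rw [maxEigH_eq_sSup_spectrum]
  exact le_csSup finite_real_spectrum.bddAbove hx

theorem Matrix.IsHermitian.maxEigH_mem_spectrum (hH : H.IsHermitian) :
    maxEigH H ∈ spectrum ℝ H := by
  rw [maxEigH_eq_sSup_spectrum]
  exact Set.Nonempty.csSup_mem ⟨_, hH.eigenvalues_mem_spectrum_real fun _ => 0⟩ finite_real_spectrum

theorem Matrix.IsHermitian.energy_le_maxEigH (hH : H.IsHermitian) (v : QState n → ℂ) :
    energy H v ≤ maxEigH H * (star v ⬝ᵥ v).re :=
  hH.energy_le_of_spectrum_le (fun _ => le_maxEigH_of_mem_spectrum) v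

theorem Matrix.IsHermitian.exists_energy_eq_maxEigH (hH : H.IsHermitian) :
    ∃ v : QState n → ℂ, (star v ⬝ᵥ v).re = 1 ∧ energy H v = maxEigH H := by
  obtain ⟨k, hk⟩ := hH.spectrum_real_eq_range_eigenvalues ▸ hH.maxEigH_mem_spectrum
  have hv : star ⇑(hH.eigenvectorBasis k) ⬝ᵥ ⇑(hH.eigenvectorBasis k) = 1 := by
    rw [dotProduct_comm, ← EuclideanSpace.inner_eq_star_dotProduct, inner_self_eq_norm_sq_to_K,
      hH.eigenvectorBasis.orthonormal.1 k]
    simp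
  refine ⟨hH.eigenvectorBasis k, by simp [hv], ?_⟩
  rw [energy, hH.mulVec_eigenvectorBasis k, dotProduct_smul, hv, ← hk]
  simp

theorem maxEigH_conjStarAlgAut (U : unitaryGroup (QState n) ℂ)
    (H : Matrix (QState n) (QState n) ℂ) :
    maxEigH (conjStarAlgAut ℂ _ U H) = maxEigH H := by
  simp only [maxEigH, AlgEquiv.spectrum_eq]

end MaxEig

section TwoSite

variable {n : ℕ} {i j : Fin n}

theorem twoSite_eq_kronPi (hij : i ≠ j) (P Q : Matrix (Fin 2) (Fin 2) ℂ) :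
    twoSite n i j P Q = kronPi fun l => if l = i then P else if l = j then Q else 1 := by
  ext x y
  rw [twoSite, kronPi, of_apply, of_apply, ← prod_sdiff (subset_univ {i, j}), prod_pair hij,
    if_pos rfl, if_neg hij.symm, if_pos rfl, mul_comm]
  congr 1
  refine prod_congr rfl fun l hl => ?_
  simp only [mem_sdiff, mem_insert, mem_singleton, not_or] at hl
  simp [hl.2.1, hl.2.2, one_apply]

theorem twoSite_one_one (hij : i ≠ j) : twoSite n i j 1 1 = 1 := by
  rw [twoSite_eq_kronPi hij, ← kronPi_one]
  congr with l
  split_ifs <;> rfl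

theorem twoSite_mul (hij : i ≠ j) (P Q P' Q' : Matrix (Fin 2) (Fin 2) ℂ) :
    twoSite n i j P Q * twoSite n i j P' Q' = twoSite n i j (P * P') (Q * Q') := by
  simp only [twoSite_eq_kronPi hij, kronPi_mul]
  congr with l
  split_ifs <;> simp

theorem twoSite_smul_smul (a b : ℂ) (P Q : Matrix (Fin 2) (Fin 2) ℂ) :
    twoSite n i j (a • P) (b • Q) = (a * b) • twoSite n i j P Q := by
  ext x y
  simp only [twoSite, of_apply, Matrix.smul_apply, smul_eq_mul]
  ring

theorem twoSite_neg_left (P Q : Matrix (Fin 2) (Fin 2) ℂ) :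
    twoSite n i j (-P) Q = -twoSite n i j P Q := by
  ext x y
  simp only [twoSite, of_apply, Matrix.neg_apply]
  ring

theorem twoSite_neg_right (P Q : Matrix (Fin 2) (Fin 2) ℂ) :
    twoSite n i j P (-Q) = -twoSite n i j P Q := by
  ext x y
  simp only [twoSite, of_apply, Matrix.neg_apply]
  ring

theorem twoSite_conjTranspose (P Q : Matrix (Fin 2) (Fin 2) ℂ) :
    (twoSite n i j P Q)ᴴ = twoSite n i j Pᴴ Qᴴ := by
  ext x y
  simp [twoSite, conjTranspose_apply, eq_comm]

theorem Matrix.IsHermitian.twoSite {P Q : Matrix (Fin 2) (Fin 2) ℂ} (hP : P.IsHermitian)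
    (hQ : Q.IsHermitian) : (twoSite n i j P Q).IsHermitian := by
  rw [IsHermitian, twoSite_conjTranspose, hP.eq, hQ.eq]

theorem conjStarAlgAut_kronPiUnitary_twoSite (hij : i ≠ j) (u : Fin n → unitaryGroup (Fin 2) ℂ)
    (P Q : Matrix (Fin 2) (Fin 2) ℂ) :
    conjStarAlgAut ℂ _ (kronPiUnitary u) (twoSite n i j P Q) =
      twoSite n i j (conjStarAlgAut ℂ _ (u i) P) (conjStarAlgAut ℂ _ (u j) Q) := by
  simp only [Unitary.conjStarAlgAut_apply, kronPiUnitary, twoSite_eq_kronPi hij,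
    star_eq_conjTranspose, kronPi_conjTranspose, kronPi_mul]
  congr with l
  split_ifs with hi hj
  · subst hi; rfl
  · subst hj; rfl
  · simp [← star_eq_conjTranspose]

end TwoSite

section Pauli

open Complex

theorem pauliX_isHermitian : pauliX.IsHermitian := by
  ext a b; fin_cases a <;> fin_cases b <;> simp [pauliX]

theorem pauliY_isHermitian : pauliY.IsHermitian := by
  ext a b; fin_cases a <;> fin_cases b <;> simp [pauliY]

theorem pauliZ_isHermitian : pauliZ.IsHermitian := by
  ext a b; fin_cases a <;> fin_cases b <;> simp [pauliZ]

theorem pauliX_mul_self : pauliX * pauliX = 1 := by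
  ext a b; fin_cases a <;> fin_cases b <;> simp [pauliX, mul_apply, one_apply]

theorem pauliY_mul_self : pauliY * pauliY = 1 := by
  ext a b; fin_cases a <;> fin_cases b <;> simp [pauliY, mul_apply, one_apply]

theorem pauliZ_mul_self : pauliZ * pauliZ = 1 := by
  ext a b; fin_cases a <;> fin_cases b <;> simp [pauliZ, mul_apply, one_apply]

theorem pauliZ_mul_pauliX : pauliZ * pauliX = -(pauliX * pauliZ) := by
  ext a b; fin_cases a <;> fin_cases b <;> simp [pauliX, pauliZ, mul_apply]

theorem pauliY_eq_I_smul : pauliY = I • (pauliX * pauliZ) := by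
  ext a b; fin_cases a <;> fin_cases b <;> simp [pauliX, pauliY, pauliZ]

def pauliYUnitary : unitaryGroup (Fin 2) ℂ :=
  ⟨pauliY, by rw [mem_unitaryGroup_iff, star_eq_conjTranspose, pauliY_isHermitian.eq,
    pauliY_mul_self]⟩

theorem conjStarAlgAut_pauliYUnitary_pauliX :
    conjStarAlgAut ℂ _ pauliYUnitary pauliX = -pauliX := by
  ext a b; fin_cases a <;> fin_cases b <;>
    simp [pauliYUnitary, pauliX, pauliY, mul_apply, star_eq_conjTranspose]

theorem conjStarAlgAut_pauliYUnitary_pauliY :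
    conjStarAlgAut ℂ _ pauliYUnitary pauliY = pauliY := by
  ext a b; fin_cases a <;> fin_cases b <;>
    simp [pauliYUnitary, pauliY, mul_apply, star_eq_conjTranspose]

theorem conjStarAlgAut_pauliYUnitary_pauliZ :
    conjStarAlgAut ℂ _ pauliYUnitary pauliZ = -pauliZ := by
  ext a b; fin_cases a <;> fin_cases b <;>
    simp [pauliYUnitary, pauliZ, pauliY, mul_apply, star_eq_conjTranspose]

/-- `e^{iπ/4} (1 - iX) / √2`, a quarter turn about the `x`-axis; the phase makes the entries
rational. -/
def rotX : unitaryGroup (Fin 2) ℂ :=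
  ⟨!![(1 + I) / 2, (1 - I) / 2; (1 - I) / 2, (1 + I) / 2], by
    rw [mem_unitaryGroup_iff]
    ext a b; fin_cases a <;> fin_cases b <;>
      simp [mul_apply, star_eq_conjTranspose, map_ofNat] <;> grind [I_sq]⟩

theorem conjStarAlgAut_rotX_pauliX : conjStarAlgAut ℂ _ rotX pauliX = pauliX := by
  ext a b; fin_cases a <;> fin_cases b <;>
    simp [rotX, pauliX, mul_apply, star_eq_conjTranspose, map_ofNat] <;> grind [I_sq]

theorem conjStarAlgAut_rotX_pauliY : conjStarAlgAut ℂ _ rotX pauliY = pauliZ := by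
  ext a b; fin_cases a <;> fin_cases b <;>
    simp [rotX, pauliY, pauliZ, mul_apply, star_eq_conjTranspose, map_ofNat] <;> grind [I_sq]

theorem conjStarAlgAut_rotX_pauliZ : conjStarAlgAut ℂ _ rotX pauliZ = -pauliY := by
  ext a b; fin_cases a <;> fin_cases b <;>
    simp [rotX, pauliY, pauliZ, mul_apply, star_eq_conjTranspose, map_ofNat] <;> grind [I_sq]

end Pauli

section EdgeTerms

variable {n : ℕ} {i j : Fin n}

theorem hQMC_isHermitian (i j : Fin n) : (hQMC n i j).IsHermitian :=
  (((isHermitian_one.sub (pauliX_isHermitian.twoSite pauliX_isHermitian)).sub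
    (pauliY_isHermitian.twoSite pauliY_isHermitian)).sub
    (pauliZ_isHermitian.twoSite pauliZ_isHermitian)).smul (by simp [IsSelfAdjoint])

theorem hEPR_isHermitian (i j : Fin n) : (hEPR n i j).IsHermitian :=
  (((isHermitian_one.add (pauliX_isHermitian.twoSite pauliX_isHermitian)).sub
    (pauliY_isHermitian.twoSite pauliY_isHermitian)).add
    (pauliZ_isHermitian.twoSite pauliZ_isHermitian)).smul (by simp [IsSelfAdjoint])

theorem hQMC_eq_mul (hij : i ≠ j) :
    hQMC n i j =
      (1 / 2 : ℂ) • ((1 - twoSite n i j pauliX pauliX) * (1 - twoSite n i j pauliZ pauliZ)) := by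
  have hY : twoSite n i j pauliY pauliY =
      -(twoSite n i j pauliX pauliX * twoSite n i j pauliZ pauliZ) := by
    rw [pauliY_eq_I_smul, twoSite_smul_smul, twoSite_mul hij, Complex.I_mul_I, neg_one_smul]
  rw [hQMC, hY]
  noncomm_ring

theorem hQMC_mul_self (hij : i ≠ j) : hQMC n i j * hQMC n i j = (2 : ℂ) • hQMC n i j := by
  set A := twoSite n i j pauliX pauliX
  set C := twoSite n i j pauliZ pauliZ
  have hA : A * A = 1 := by rw [twoSite_mul hij, pauliX_mul_self, twoSite_one_one hij]
  have hC : C * C = 1 := by rw [twoSite_mul hij, pauliZ_mul_self, twoSite_one_one hij]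
  have hCA : Commute C A := by
    rw [Commute, SemiconjBy, twoSite_mul hij, twoSite_mul hij, pauliZ_mul_pauliX,
      twoSite_neg_left, twoSite_neg_right, neg_neg]
  have hcomm : Commute (1 - C) (1 - A) :=
    (Commute.one_right _).sub_right ((Commute.one_left A).sub_left hCA)
  rw [hQMC_eq_mul hij, smul_mul_smul, hcomm.mul_mul_mul_comm,
    one_sub_mul_one_sub_of_mul_self_eq_one hA, one_sub_mul_one_sub_of_mul_self_eq_one hC,
    add_mul, mul_add]
  module

theorem hQMC_posSemidef (hij : i ≠ j) : (hQMC n i j).PosSemidef := by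
  have h : hQMC n i j = (1 / 2 : ℂ) • ((hQMC n i j)ᴴ * hQMC n i j) := by
    rw [(hQMC_isHermitian i j).eq, hQMC_mul_self hij, smul_smul]
    norm_num
  rw [h]
  exact (posSemidef_conjTranspose_mul_self _).smul (by norm_num [Complex.le_def])

def hEPRRot (n : ℕ) (i j : Fin n) : Matrix (QState n) (QState n) ℂ :=
  (1 / 2 : ℂ) • ((1 : Matrix (QState n) (QState n) ℂ)
    + twoSite n i j pauliX pauliX + twoSite n i j pauliY pauliY
    - twoSite n i j pauliZ pauliZ)

def rotAll (n : ℕ) : unitaryGroup (QState n) ℂ := kronPiUnitary fun _ => rotX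

theorem conjStarAlgAut_rotAll_hEPR (hij : i ≠ j) :
    conjStarAlgAut ℂ _ (rotAll n) (hEPR n i j) = hEPRRot n i j := by
  simp only [rotAll, hEPR, hEPRRot, map_smul, map_add, map_sub, map_one,
    conjStarAlgAut_kronPiUnitary_twoSite hij, conjStarAlgAut_rotX_pauliX,
    conjStarAlgAut_rotX_pauliY, conjStarAlgAut_rotX_pauliZ, twoSite_neg_left, twoSite_neg_right,
    neg_neg]
  congr 1
  abel

def flipY (s : QState n) : unitaryGroup (QState n) ℂ :=
  kronPiUnitary fun l => if s l = 0 then 1 else pauliYUnitary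

theorem conjStarAlgAut_flipY_hQMC (hij : i ≠ j) (s : QState n) :
    conjStarAlgAut ℂ _ (flipY s) (hQMC n i j) =
      if s i = s j then hQMC n i j else hEPR n i j := by
  simp only [flipY, hQMC, map_smul, map_sub, map_one, conjStarAlgAut_kronPiUnitary_twoSite hij]
  generalize s i = a, s j = b
  fin_cases a <;> fin_cases b <;>
    simp only [Fin.zero_eta, Fin.mk_one, one_ne_zero, zero_ne_one, ↓reduceIte, map_one,
      StarAlgEquiv.one_apply, conjStarAlgAut_pauliYUnitary_pauliX,
      conjStarAlgAut_pauliYUnitary_pauliY, conjStarAlgAut_pauliYUnitary_pauliZ,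
      twoSite_neg_left, twoSite_neg_right, neg_neg, hEPR] <;>
    module


theorem norm_hQMC_apply_le (hij : i ≠ j) (x y : QState n) :
    ‖hQMC n i j x y‖ ≤ (hEPRRot n i j x y).re := by
  set D : ℝ := ∏ l ∈ univ \ {i, j}, if x l = y l then 1 else 0
  have hD : 0 ≤ D := prod_nonneg fun _ _ => by split_ifs <;> norm_num
  have hDc : ∏ l ∈ univ \ {i, j}, (if x l = y l then (1 : ℂ) else 0) = D := by
    rw [Complex.ofReal_prod]
    exact prod_congr rfl fun l _ => by split_ifs <;> simp
  have h1 : (1 : Matrix (QState n) (QState n) ℂ) x y =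
      (1 : Matrix (Fin 2) (Fin 2) ℂ) (x i) (y i) * (1 : Matrix (Fin 2) (Fin 2) ℂ) (x j) (y j) *
        D := by
    rw [← twoSite_one_one hij, twoSite, of_apply, hDc]
  simp only [hQMC, hEPRRot, Matrix.smul_apply, Matrix.sub_apply, Matrix.add_apply, h1, twoSite,
    of_apply, hDc, smul_eq_mul]
  generalize x i = a, x j = b, y i = c, y j = d
  fin_cases a <;> fin_cases b <;> fin_cases c <;> fin_cases d <;>
    simp [pauliX, pauliY, pauliZ, one_apply] <;>
    simp [← two_mul, ← neg_add', Complex.norm_real, abs_of_nonneg hD]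

end EdgeTerms

section EdgeSum

variable {ι : Type*} {n : ℕ}

def edgeSum (w : Fin n → Fin n → ℝ) : (Fin n → Fin n → Matrix ι ι ℂ) →ₗ[ℂ] Matrix ι ι ℂ where
  toFun A := (1 / 2 : ℂ) • ∑ i, ∑ j, (w i j : ℂ) • A i j
  map_add' A B := by simp only [Pi.add_apply, smul_add, sum_add_distrib]
  map_smul' c A := by
    simp only [Pi.smul_apply, smul_comm _ c, ← smul_sum, RingHom.id_apply]

theorem edgeSum_apply (w : Fin n → Fin n → ℝ) (A : Fin n → Fin n → Matrix ι ι ℂ) :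
    edgeSum w A = (1 / 2 : ℂ) • ∑ i, ∑ j, (w i j : ℂ) • A i j := rfl

theorem edgeSum_congr {w : Fin n → Fin n → ℝ} (hdiag : ∀ i, w i i = 0)
    {A B : Fin n → Fin n → Matrix ι ι ℂ} (h : ∀ i j, i ≠ j → A i j = B i j) :
    edgeSum w A = edgeSum w B := by
  simp only [edgeSum_apply]
  congr 1
  refine sum_congr rfl fun i _ => sum_congr rfl fun j _ => ?_
  rcases eq_or_ne i j with rfl | hij
  · simp [hdiag]
  · rw [h i j hij]

theorem edgeSum_isHermitian (w : Fin n → Fin n → ℝ) {A : Fin n → Fin n → Matrix ι ι ℂ}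
    (h : ∀ i j, (A i j).IsHermitian) : (edgeSum w A).IsHermitian := by
  refine IsHermitian.smul ?_ (by simp [IsSelfAdjoint])
  exact isSelfAdjoint_sum _ fun i _ => isSelfAdjoint_sum _ fun j _ =>
    (h i j).smul (by simp [IsSelfAdjoint])

theorem edgeSum_posSemidef {w : Fin n → Fin n → ℝ} (hw : ∀ i j, 0 ≤ w i j) (hdiag : ∀ i, w i i = 0)
    {A : Fin n → Fin n → Matrix ι ι ℂ} (h : ∀ i j, i ≠ j → (A i j).PosSemidef) :
    (edgeSum w A).PosSemidef := by
  refine PosSemidef.smul ?_ (by norm_num [Complex.le_def])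
  refine posSemidef_sum _ fun i _ => posSemidef_sum _ fun j _ => ?_
  rcases eq_or_ne i j with rfl | hij
  · simp [hdiag, PosSemidef.zero]
  · exact (h i j hij).smul (Complex.zero_le_real.mpr (hw i j))

theorem norm_edgeSum_apply_le {w : Fin n → Fin n → ℝ} (hw : ∀ i j, 0 ≤ w i j)
    (hdiag : ∀ i, w i i = 0) {A B : Fin n → Fin n → Matrix ι ι ℂ} {x y : ι}
    (h : ∀ i j, i ≠ j → ‖A i j x y‖ ≤ (B i j x y).re) :
    ‖edgeSum w A x y‖ ≤ (edgeSum w B x y).re := by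
  have key : ‖∑ i, ∑ j, (w i j : ℂ) * A i j x y‖ ≤ (∑ i, ∑ j, (w i j : ℂ) * B i j x y).re := by
    simp only [Complex.re_sum, Complex.re_ofReal_mul]
    refine (norm_sum_le _ _).trans (sum_le_sum fun i _ =>
      (norm_sum_le _ _).trans (sum_le_sum fun j _ => ?_))
    rw [norm_mul, Complex.norm_real, Real.norm_of_nonneg (hw i j)]
    rcases eq_or_ne i j with rfl | hij
    · simp [hdiag]
    · exact mul_le_mul_of_nonneg_left (h i j hij) (hw i j)
  simp only [edgeSum_apply, Matrix.smul_apply, Matrix.sum_apply, smul_eq_mul]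
  rw [norm_mul, show (1 / 2 : ℂ) = ((1 / 2 : ℝ) : ℂ) by norm_num, Complex.re_ofReal_mul,
    Complex.norm_real, Real.norm_of_nonneg (by norm_num)]
  exact mul_le_mul_of_nonneg_left key (by norm_num)

theorem conjStarAlgAut_edgeSum [Fintype ι] [DecidableEq ι] (U : unitaryGroup ι ℂ)
    (w : Fin n → Fin n → ℝ) (A : Fin n → Fin n → Matrix ι ι ℂ) :
    conjStarAlgAut ℂ _ U (edgeSum w A) =
      edgeSum w fun i j => conjStarAlgAut ℂ _ U (A i j) := by
  simp only [edgeSum_apply, map_smul, map_sum]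

end EdgeSum

section Bounds

variable {n : ℕ} {w : Fin n → Fin n → ℝ}

theorem HQMC_eq_edgeSum (n : ℕ) (w : Fin n → Fin n → ℝ) : HQMC n w = edgeSum w (hQMC n) := rfl

theorem HEPR_eq_edgeSum (n : ℕ) (w : Fin n → Fin n → ℝ) : HEPR n w = edgeSum w (hEPR n) := rfl

theorem HQMC_isHermitian (n : ℕ) (w : Fin n → Fin n → ℝ) : (HQMC n w).IsHermitian :=
  edgeSum_isHermitian w hQMC_isHermitian

theorem HEPR_isHermitian (n : ℕ) (w : Fin n → Fin n → ℝ) : (HEPR n w).IsHermitian :=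
  edgeSum_isHermitian w hEPR_isHermitian

theorem sum_conjStarAlgAut_flipY_hQMC {i j : Fin n} (hij : i ≠ j) :
    ∑ s, conjStarAlgAut ℂ _ (flipY s) (hQMC n i j) =
      (2 ^ n / 2 : ℂ) • (hQMC n i j + hEPR n i j) := by
  have hcard := card_filter_apply_eq_eq_card_filter_apply_ne hij
  have htotal : (#{s : QState n | s i = s j} : ℂ) + #{s : QState n | s i ≠ s j} = 2 ^ n := by
    exact_mod_cast (card_filter_add_card_filter_not _).trans (by simp)
  simp only [conjStarAlgAut_flipY_hQMC hij, sum_ite, sum_const, ← hcard, ← Nat.cast_smul_eq_nsmul ℂ,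
    ← smul_add]
  congr 1
  rw [← hcard] at htotal
  linear_combination htotal / 2

theorem sum_conjStarAlgAut_flipY_HQMC (hdiag : ∀ i, w i i = 0) :
    ∑ s, conjStarAlgAut ℂ _ (flipY s) (HQMC n w) =
      (2 ^ n / 2 : ℂ) • (HQMC n w + HEPR n w) := by
  simp only [HQMC_eq_edgeSum, HEPR_eq_edgeSum, conjStarAlgAut_edgeSum, ← map_sum, ← map_add,
    ← map_smul]
  refine edgeSum_congr hdiag fun i j hij => ?_
  rw [Finset.sum_apply, Finset.sum_apply]
  exact sum_conjStarAlgAut_flipY_hQMC hij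

theorem maxEigH_HQMC_le_maxEigH_HEPR (hw : ∀ i j, 0 ≤ w i j) (hdiag : ∀ i, w i i = 0) :
    maxEigH (HQMC n w) ≤ maxEigH (HEPR n w) := by
  have hrot : conjStarAlgAut ℂ _ (rotAll n) (HEPR n w) = edgeSum w (hEPRRot n) :=
    (conjStarAlgAut_edgeSum _ _ _).trans
      (edgeSum_congr hdiag fun _ _ hij => conjStarAlgAut_rotAll_hEPR hij)
  have hrotHerm := hrot ▸ (HEPR_isHermitian n w).conjStarAlgAut (rotAll n)
  obtain ⟨ψ, hψ, hE⟩ := (HQMC_isHermitian n w).exists_energy_eq_maxEigH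
  calc maxEigH (HQMC n w) = energy (HQMC n w) ψ := hE.symm
    _ ≤ energy (edgeSum w (hEPRRot n)) fun x => (‖ψ x‖ : ℂ) :=
        energy_le_energy_norm (fun x y =>
          norm_edgeSum_apply_le hw hdiag fun _ _ hij => norm_hQMC_apply_le hij x y) ψ
    _ ≤ maxEigH (edgeSum w (hEPRRot n)) := by
        have := hrotHerm.energy_le_maxEigH fun x => (‖ψ x‖ : ℂ)
        rwa [re_star_norm_dotProduct, hψ, mul_one] at this
    _ = maxEigH (HEPR n w) := by rw [← hrot, maxEigH_conjStarAlgAut]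

theorem maxEigH_HEPR_le_two_mul_maxEigH_HQMC (hw : ∀ i j, 0 ≤ w i j) (hdiag : ∀ i, w i i = 0) :
    maxEigH (HEPR n w) ≤ 2 * maxEigH (HQMC n w) := by
  obtain ⟨φ, hφ, hE⟩ := (HEPR_isHermitian n w).exists_energy_eq_maxEigH
  have hQMC_nonneg : 0 ≤ energy (HQMC n w) φ :=
    (edgeSum_posSemidef hw hdiag fun _ _ hij => hQMC_posSemidef hij).re_dotProduct_nonneg φ
  have hterm : ∀ s, energy (conjStarAlgAut ℂ _ (flipY s) (HQMC n w)) φ ≤ maxEigH (HQMC n w) :=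
    fun s => by
      have := ((HQMC_isHermitian n w).conjStarAlgAut (flipY s)).energy_le_maxEigH φ
      rwa [maxEigH_conjStarAlgAut, hφ, mul_one] at this
  have hsum : ∑ s, energy (conjStarAlgAut ℂ _ (flipY s) (HQMC n w)) φ ≤
      2 ^ n * maxEigH (HQMC n w) := by
    simpa using sum_le_sum fun s (_ : s ∈ univ) => hterm s
  have htwirl : ∑ s, energy (conjStarAlgAut ℂ _ (flipY s) (HQMC n w)) φ =
      2 ^ n / 2 * (energy (HQMC n w) φ + maxEigH (HEPR n w)) := by
    rw [← energy_sum, sum_conjStarAlgAut_flipY_HQMC hdiag, ← hE, ← energy_add, ← energy_ofReal_smul]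
    push_cast
    rfl
  have h2n : (0 : ℝ) < 2 ^ n := by positivity
  nlinarith

end Bounds

theorem QMC_between_EPR_general (n : ℕ) (w : Fin n → Fin n → ℝ)
    (hnonneg : ∀ i j, 0 ≤ w i j)
    (hdiag : ∀ i, w i i = 0) :
    maxEigH (HEPR n w) / 2 ≤ maxEigH (HQMC n w) ∧
    maxEigH (HQMC n w) ≤ maxEigH (HEPR n w) :=
  ⟨by linarith [maxEigH_HEPR_le_two_mul_maxEigH_HQMC hnonneg hdiag],
    maxEigH_HQMC_le_maxEigH_HEPR hnonneg hdiag⟩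

/-- For any weighted graph with nonnegative edge weights,
`λ_max(H^EPR(G))/2 ≤ λ_max(H^QMC(G)) ≤ λ_max(H^EPR(G))`. -/
theorem QMC_between_EPR (n : ℕ) (w : Fin n → Fin n → ℝ)
    (hsymm : ∀ i j, w i j = w j i) (hnonneg : ∀ i j, 0 ≤ w i j)
    (hdiag : ∀ i, w i i = 0) :
    maxEigH (HEPR n w) / 2 ≤ maxEigH (HQMC n w) ∧
    maxEigH (HQMC n w) ≤ maxEigH (HEPR n w) :=
  QMC_between_EPR_general n w hnonneg hdiag
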